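/- arXiv:1203.1850 — 3 statements merged into one kernel-verified Lean document; each statement's English description precedes it below -/
import Mathlib

section
/- (Hunter bound / second-order Bonferroni inequality for a path-like selection) For events E_1, ..., E_M and any choice of indices π̂_i ∈ {1, ..., i−1} for each i = 2, ..., M, the probability of the union of the E_i is at most the sum of P(E_i) minus the sum over i from 2 to M of P(E_i ∩ E_{π̂_i}). -/
/-!
Cover each point of `⋃ i, E i` by the first set `E i` containing it: if `π i < i`, that point
avoids `E (π i)`, so it lies in `E i \ E (π i)`. Hence the union is covered by the sets `E i`
with no predecessor `π i` together with the sets `E i \ E (π i)`, and a union bound finishes,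
since `P(E i \ E (π i)) = P(E i) - P(E i ∩ E (π i))`.
-/

open MeasureTheory Finset

section HunterBound

variable {Ω ι : Type*}

theorem Set.iUnion_subset_union_iUnion_sdiff_of_lt [LinearOrder ι] [WellFoundedLT ι]
    (E : ι → Set Ω) (p : ι → Prop) (π : ι → ι) (hπ : ∀ i, p i → π i < i) :
    ⋃ i, E i ⊆ (⋃ (i) (_ : ¬ p i), E i) ∪ ⋃ (i) (_ : p i), E i \ E (π i) := by
  intro ω hω
  obtain ⟨i, hi, hmin⟩ := wellFounded_lt.has_min {i | ω ∈ E i} (Set.mem_iUnion.mp hω)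
  by_cases hpi : p i
  · have hω_notMem : ω ∉ E (π i) := fun h => hmin (π i) h (hπ i hpi)
    exact Or.inr (Set.mem_biUnion hpi ⟨hi, hω_notMem⟩)
  · exact Or.inl (Set.mem_biUnion hpi hi)

variable [MeasurableSpace Ω] (μ : Measure Ω) [IsFiniteMeasure μ]
  [Fintype ι] [LinearOrder ι] (E : ι → Set Ω) (p : ι → Prop) [DecidablePred p] (π : ι → ι)

theorem measureReal_iUnion_le_sum_add_sum_sdiff (hπ : ∀ i, p i → π i < i) :
    μ.real (⋃ i, E i) ≤ ∑ i with ¬ p i, μ.real (E i) + ∑ i with p i, μ.real (E i \ E (π i)) := by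
  have hcover := Set.iUnion_subset_union_iUnion_sdiff_of_lt E p π hπ
  calc μ.real (⋃ i, E i)
      ≤ μ.real ((⋃ i ∈ univ.filter (¬ p ·), E i) ∪ ⋃ i ∈ univ.filter p, E i \ E (π i)) :=
        measureReal_mono (by simpa only [mem_filter, mem_univ, true_and] using hcover)
    _ ≤ _ := (measureReal_union_le _ _).trans
        (add_le_add (measureReal_biUnion_finset_le _ _) (measureReal_biUnion_finset_le _ _))

theorem measureReal_iUnion_le_sum_sub_sum_inter (hE : ∀ i, MeasurableSet (E i))
    (hπ : ∀ i, p i → π i < i) :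
    μ.real (⋃ i, E i) ≤ ∑ i, μ.real (E i) - ∑ i with p i, μ.real (E i ∩ E (π i)) := by
  have hsdiff : ∀ i, μ.real (E i \ E (π i)) = μ.real (E i) - μ.real (E i ∩ E (π i)) := fun i =>
    eq_sub_of_add_eq' (measureReal_inter_add_sdiff (hE (π i)))
  calc μ.real (⋃ i, E i)
      ≤ ∑ i with ¬ p i, μ.real (E i) + ∑ i with p i, μ.real (E i \ E (π i)) :=
        measureReal_iUnion_le_sum_add_sum_sdiff μ E p π hπ
    _ = _ := by
      rw [← sum_filter_add_sum_filter_not univ p (fun i => μ.real (E i))]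
      simp only [hsdiff, sum_sub_distrib]
      ring

end HunterBound

theorem hunter_bound_general
    {Ω : Type*} [MeasurableSpace Ω] (μ : Measure Ω) [IsProbabilityMeasure μ]
    {M : ℕ} (E : Fin M → Set Ω) (hE : ∀ i, MeasurableSet (E i))
    (π : Fin M → Fin M) (hπ : ∀ i : Fin M, 0 < (i : ℕ) → π i < i) :
    (μ (⋃ i, E i)).toReal ≤
      (∑ i : Fin M, (μ (E i)).toReal) -
        ∑ i ∈ Finset.univ.filter (fun i : Fin M => 0 < (i : ℕ)),
          (μ (E i ∩ E (π i))).toReal :=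
  measureReal_iUnion_le_sum_sub_sum_inter μ E _ π hE hπ

/-- Hunter bound / second-order Bonferroni inequality for a path-like selection
of indices `π i < i`. -/
theorem hunter_bound
    {Ω : Type*} [MeasurableSpace Ω] (μ : Measure Ω) [IsProbabilityMeasure μ]
    {M : ℕ} (hM : 1 ≤ M) (E : Fin M → Set Ω) (hE : ∀ i, MeasurableSet (E i))
    (π : Fin M → Fin M) (hπ : ∀ i : Fin M, 0 < (i : ℕ) → π i < i) :
    (μ (⋃ i, E i)).toReal ≤
      (∑ i : Fin M, (μ (E i)).toReal) -
        ∑ i ∈ Finset.univ.filter (fun i : Fin M => 0 < (i : ℕ)),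
          (μ (E i ∩ E (π i))).toReal :=
  hunter_bound_general μ E hE π hπ
end

section
/- Let ξ = (ξ_1, ξ_2) be a standard bivariate Gaussian vector with independent N(0, σ²) components. Let H_1 = {ξ : ⟨ξ, u⟩ ≥ r_1} and H_2 = {ξ : ⟨ξ, v⟩ ≥ r_2} be two half-planes determined by unit vectors u, v at angle θ ∈ [0, π] and distances 0 ≤ r_1 ≤ r_2. Then P(H_1 ∪ H_2) ≤ Q(r_1/σ) + (θ/(2π))·exp(−r_2²/(2σ²)). -/
open MeasureTheory ProbabilityTheory

noncomputable def gaussianQ (x : ℝ) : ℝ :=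
  (1 / Real.sqrt (2 * Real.pi)) * ∫ t in Set.Ici x, Real.exp (-t ^ 2 / 2)

/-!
The isotropic Gaussian is invariant under rotations and reflections, so `P(H₁) = Q(r₁/σ)`, and
mapping `v` to the first basis vector turns `H₂ \ H₁` into `wedge θ r₁ r₂`. In polar coordinates
`(ρ, φ)` a point of the wedge has `|φ| ≤ γ := arccos (r₂ / ρ)` but `φ + θ > γ`, so every circle of
radius `ρ ≥ r₂` meets it in an arc of length at most `θ`, and no smaller circle meets it.
Integrating `θ ρ exp (-ρ² / 2σ²) / (2πσ²)` over `ρ ≥ r₂` gives the second term.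
-/

open Set Real Filter
open scoped ENNReal NNReal

theorem LinearMap.measurePreserving_of_abs_det_eq_one {E : Type*} [NormedAddCommGroup E]
    [NormedSpace ℝ E] [MeasurableSpace E] [BorelSpace E] [FiniteDimensional ℝ E]
    (μ : Measure E) [μ.IsAddHaarMeasure] {f : E →ₗ[ℝ] E} (hf : |LinearMap.det f| = 1) :
    MeasurePreserving f μ μ := by
  have hdet : LinearMap.det f ≠ 0 := fun h => by simp [h] at hf
  refine ⟨f.continuous_of_finiteDimensional.measurable, ?_⟩
  rw [Measure.map_linearMap_addHaar_eq_smul_addHaar μ hdet, abs_inv, hf]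
  simp

theorem MeasureTheory.MeasurePreserving.withDensity_comp {α β : Type*} [MeasurableSpace α]
    [MeasurableSpace β] {μ : Measure α} {ν : Measure β} {T : α → β}
    (hT : MeasurePreserving T μ ν) {D : β → ℝ≥0∞} (hD : Measurable D) :
    MeasurePreserving T (μ.withDensity (D ∘ T)) (ν.withDensity D) := by
  refine ⟨hT.measurable, Measure.ext fun s hs => ?_⟩
  rw [Measure.map_apply hT.measurable hs, withDensity_apply _ hs,
    withDensity_apply _ (hT.measurable hs), ← hT.setLIntegral_comp_preimage hs hD]
  rfl

/-- The linear map with rows `w` and `ε • (-w.2, w.1)`: a rotation or a reflection when `w` is a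
unit vector and `|ε| = 1`. -/
noncomputable def orthoMap (w : ℝ × ℝ) (ε : ℝ) : ℝ × ℝ →ₗ[ℝ] ℝ × ℝ :=
  Matrix.toLin (Module.Basis.finTwoProd ℝ) (Module.Basis.finTwoProd ℝ)
    !![w.1, w.2; -(ε * w.2), ε * w.1]

theorem orthoMap_apply (w : ℝ × ℝ) (ε : ℝ) (p : ℝ × ℝ) :
    orthoMap w ε p = (p.1 * w.1 + p.2 * w.2, ε * (p.2 * w.1 - p.1 * w.2)) := by
  simp only [orthoMap, Matrix.toLin_finTwoProd_apply]
  ext <;> simp only <;> ring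

theorem det_orthoMap (w : ℝ × ℝ) (ε : ℝ) :
    LinearMap.det (orthoMap w ε) = ε * (w.1 ^ 2 + w.2 ^ 2) := by
  rw [orthoMap, LinearMap.det_toLin, Matrix.det_fin_two_of]
  ring

theorem orthoMap_normSq {w : ℝ × ℝ} (hw : w.1 ^ 2 + w.2 ^ 2 = 1) {ε : ℝ} (hε : |ε| = 1)
    (p : ℝ × ℝ) : (orthoMap w ε p).1 ^ 2 + (orthoMap w ε p).2 ^ 2 = p.1 ^ 2 + p.2 ^ 2 := by
  have hε2 : ε ^ 2 = 1 := by rw [← sq_abs, hε, one_pow]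
  rw [orthoMap_apply]
  linear_combination (p.1 ^ 2 + p.2 ^ 2) * hw + (p.2 * w.1 - p.1 * w.2) ^ 2 * hε2

noncomputable def isoGaussianPDF (v : ℝ) (p : ℝ × ℝ) : ℝ :=
  (2 * π * v)⁻¹ * exp (-(p.1 ^ 2 + p.2 ^ 2) / (2 * v))

theorem measurable_isoGaussianPDF (v : ℝ) : Measurable (isoGaussianPDF v) := by
  unfold isoGaussianPDF; fun_prop

theorem gaussianReal_prod_eq_withDensity {v : ℝ≥0} (hv : v ≠ 0) :
    (gaussianReal 0 v).prod (gaussianReal 0 v) =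
      volume.withDensity fun p => ENNReal.ofReal (isoGaussianPDF v p) := by
  rw [gaussianReal_of_var_ne_zero 0 hv,
    prod_withDensity (measurable_gaussianPDF _ _) (measurable_gaussianPDF _ _),
    ← Measure.volume_eq_prod]
  congr 1
  funext p
  simp only [gaussianPDF, gaussianPDFReal, isoGaussianPDF, sub_zero]
  rw [← ENNReal.ofReal_mul (by positivity), mul_mul_mul_comm, ← mul_inv,
    Real.mul_self_sqrt (by positivity), ← Real.exp_add]
  congr 3
  ring

theorem measurePreserving_gaussianReal_prod {v : ℝ≥0} (hv : v ≠ 0) {T : ℝ × ℝ →ₗ[ℝ] ℝ × ℝ}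
    (hdet : |LinearMap.det T| = 1) (hT : ∀ p, (T p).1 ^ 2 + (T p).2 ^ 2 = p.1 ^ 2 + p.2 ^ 2) :
    MeasurePreserving T ((gaussianReal 0 v).prod (gaussianReal 0 v))
      ((gaussianReal 0 v).prod (gaussianReal 0 v)) := by
  have hD := (T.measurePreserving_of_abs_det_eq_one volume hdet).withDensity_comp
    (measurable_isoGaussianPDF v).ennreal_ofReal
  have hDT : (fun p => ENNReal.ofReal (isoGaussianPDF v p)) ∘ T =
      fun p => ENNReal.ofReal (isoGaussianPDF v p) := by
    funext p; simp only [Function.comp, isoGaussianPDF, hT]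
  rwa [hDT, ← gaussianReal_prod_eq_withDensity hv] at hD

theorem measurePreserving_orthoMap {v : ℝ≥0} (hv : v ≠ 0) {w : ℝ × ℝ}
    (hw : w.1 ^ 2 + w.2 ^ 2 = 1) {ε : ℝ} (hε : |ε| = 1) :
    MeasurePreserving (orthoMap w ε) ((gaussianReal 0 v).prod (gaussianReal 0 v))
      ((gaussianReal 0 v).prod (gaussianReal 0 v)) :=
  measurePreserving_gaussianReal_prod hv (by rw [det_orthoMap, hw, mul_one, hε])
    (orthoMap_normSq hw hε)

theorem gaussianQ_nonneg (x : ℝ) : 0 ≤ gaussianQ x :=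
  mul_nonneg (by positivity) (integral_nonneg fun _ => (exp_pos _).le)

theorem gaussianReal_Ici (x : ℝ) : gaussianReal 0 1 (Ici x) = ENNReal.ofReal (gaussianQ x) := by
  rw [gaussianReal_apply_eq_integral 0 one_ne_zero, gaussianQ, ← integral_const_mul]
  congr 1
  refine setIntegral_congr_fun measurableSet_Ici fun t _ => ?_
  simp [gaussianPDFReal]

theorem gaussianReal_sq_Ici {σ : ℝ} (hσ : 0 < σ) (r : ℝ) :
    gaussianReal 0 (σ ^ 2).toNNReal (Ici r) = ENNReal.ofReal (gaussianQ (r / σ)) := by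
  have hmap := gaussianReal_map_const_mul (μ := 0) (v := 1) σ
  have hpre : (σ * ·) ⁻¹' Ici r = Ici (r / σ) := by
    ext t; simp [div_le_iff₀' hσ]
  rw [mul_zero, mul_one, ← Real.toNNReal_of_nonneg (sq_nonneg σ)] at hmap
  rw [← hmap, Measure.map_apply (by fun_prop) measurableSet_Ici, hpre, gaussianReal_Ici]

theorem gaussianReal_prod_halfPlane {v : ℝ≥0} (hv : v ≠ 0) {u : ℝ × ℝ}
    (hu : u.1 ^ 2 + u.2 ^ 2 = 1) (r : ℝ) :
    (gaussianReal 0 v).prod (gaussianReal 0 v) {x | x.1 * u.1 + x.2 * u.2 ≥ r} =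
      gaussianReal 0 v (Ici r) := by
  have hpre : {x : ℝ × ℝ | x.1 * u.1 + x.2 * u.2 ≥ r} = orthoMap u 1 ⁻¹' (Ici r ×ˢ univ) := by
    ext x; simp [orthoMap_apply]
  rw [hpre, (measurePreserving_orthoMap hv hu abs_one).measure_preimage
    (measurableSet_Ici.prod MeasurableSet.univ).nullMeasurableSet, Measure.prod_prod,
    measure_univ, mul_one]

theorem exists_orthoMap_eq_cos_sub_sin {u v : ℝ × ℝ} (hu : u.1 ^ 2 + u.2 ^ 2 = 1)
    (hv : v.1 ^ 2 + v.2 ^ 2 = 1) {θ : ℝ} (hcos : cos θ = u.1 * v.1 + u.2 * v.2) :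
    ∃ ε : ℝ, |ε| = 1 ∧ ∀ p : ℝ × ℝ,
      p.1 * u.1 + p.2 * u.2 = (orthoMap v ε p).1 * cos θ - (orthoMap v ε p).2 * sin θ := by
  have hsin : (u.1 * v.2 - u.2 * v.1 - sin θ) * (u.1 * v.2 - u.2 * v.1 + sin θ) = 0 := by
    linear_combination (v.1 ^ 2 + v.2 ^ 2) * hu + hv
      + (cos θ + u.1 * v.1 + u.2 * v.2) * hcos - sin_sq_add_cos_sq θ
  obtain ⟨ε, hε, hεsin⟩ : ∃ ε : ℝ, |ε| = 1 ∧ ε * sin θ = u.1 * v.2 - u.2 * v.1 := by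
    rcases mul_eq_zero.mp hsin with h | h
    · exact ⟨1, abs_one, by linarith⟩
    · exact ⟨-1, by simp, by linarith⟩
  refine ⟨ε, hε, fun p => ?_⟩
  rw [orthoMap_apply, hcos]
  linear_combination (p.2 * v.1 - p.1 * v.2) * hεsin - (p.1 * u.1 + p.2 * u.2) * hv

theorem abs_le_of_cos_le_cos {γ φ : ℝ} (hγ : 0 ≤ γ) (hφ : |φ| ≤ π) (h : cos γ ≤ cos φ) :
    |φ| ≤ γ := by
  by_contra! hlt
  have := cos_lt_cos_of_nonneg_of_le_pi hγ hφ hlt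
  rw [cos_abs] at this
  linarith

theorem mem_Ioc_of_cos_le_cos_of_cos_add_lt {γ θ φ : ℝ} (hγ : γ ∈ Icc 0 π) (hθ : 0 ≤ θ)
    (hφ : |φ| ≤ π) (hφγ : cos γ ≤ cos φ) (hφθγ : cos (φ + θ) < cos γ) : φ ∈ Ioc (γ - θ) γ := by
  have hφγ' := abs_le.mp (abs_le_of_cos_le_cos hγ.1 hφ hφγ)
  refine ⟨?_, hφγ'.2⟩
  by_contra! hle
  have : |φ + θ| ≤ γ := abs_le.mpr ⟨by linarith, by linarith⟩
  have := cos_le_cos_of_nonneg_of_le_pi (abs_nonneg _) hγ.2 this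
  rw [cos_abs] at this
  linarith

theorem volume_polar_section_le {θ r₁ r₂ ρ : ℝ} (hθ : 0 ≤ θ) (hr₂ : 0 ≤ r₂) (hr₁₂ : r₁ ≤ r₂)
    (hρ : 0 < ρ) :
    volume ({φ | r₂ ≤ ρ * cos φ ∧ ρ * cos (φ + θ) < r₁} ∩ Ioo (-π) π) ≤
      (Ici r₂).indicator (fun _ => ENNReal.ofReal θ) ρ := by
  rcases lt_or_ge ρ r₂ with hρr₂ | hρr₂
  · have hempty : {φ | r₂ ≤ ρ * cos φ ∧ ρ * cos (φ + θ) < r₁} = ∅ := by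
      refine eq_empty_of_forall_notMem fun φ ⟨h, _⟩ => ?_
      nlinarith [cos_le_one φ]
    simp [hempty]
  · have hc : cos (arccos (r₂ / ρ)) = r₂ / ρ :=
      cos_arccos (by linarith [div_nonneg hr₂ hρ.le]) ((div_le_one hρ).mpr hρr₂)
    have hsub : {φ | r₂ ≤ ρ * cos φ ∧ ρ * cos (φ + θ) < r₁} ∩ Ioo (-π) π ⊆
        Ioc (arccos (r₂ / ρ) - θ) (arccos (r₂ / ρ)) := by
      rintro φ ⟨⟨h₂, h₁⟩, hφ⟩
      refine mem_Ioc_of_cos_le_cos_of_cos_add_lt ⟨arccos_nonneg _, arccos_le_pi _⟩ hθ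
        (abs_le.mpr ⟨hφ.1.le, hφ.2.le⟩) ?_ ?_ <;> rw [hc]
      · rwa [div_le_iff₀' hρ]
      · rw [lt_div_iff₀' hρ]; linarith
    rw [indicator_of_mem (mem_Ici.mpr hρr₂)]
    calc _ ≤ volume (Ioc (arccos (r₂ / ρ) - θ) (arccos (r₂ / ρ))) := measure_mono hsub
      _ = ENNReal.ofReal θ := by rw [volume_Ioc, sub_sub_cancel]

theorem lintegral_Ioi_mul_exp_neg_sq_div {v r : ℝ} (hv : 0 < v) (hr : 0 ≤ r) :
    ∫⁻ ρ in Ioi r, ENNReal.ofReal (ρ * exp (-ρ ^ 2 / (2 * v))) =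
      ENNReal.ofReal (v * exp (-r ^ 2 / (2 * v))) := by
  have hderiv : ∀ ρ ∈ Ici r, HasDerivAt (fun ρ => -v * exp (-ρ ^ 2 / (2 * v)))
      (ρ * exp (-ρ ^ 2 / (2 * v))) ρ := fun ρ _ => by
    have h : HasDerivAt (fun ρ : ℝ => -ρ ^ 2 / (2 * v)) (-(2 * ρ) / (2 * v)) ρ := by
      simpa using ((hasDerivAt_pow 2 ρ).neg).div_const (2 * v)
    refine (h.exp.const_mul (-v)).congr_deriv ?_
    field_simp
  have hnonneg : ∀ ρ ∈ Ioi r, 0 ≤ ρ * exp (-ρ ^ 2 / (2 * v)) := fun ρ hρ =>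
    mul_nonneg (hr.trans (le_of_lt hρ)) (exp_pos _).le
  have hlim : Tendsto (fun ρ => -v * exp (-ρ ^ 2 / (2 * v))) atTop (nhds 0) := by
    have : Tendsto (fun ρ : ℝ => -ρ ^ 2 / (2 * v)) atTop atBot :=
      (tendsto_neg_atBot_iff.mpr (tendsto_pow_atTop two_ne_zero)).atBot_div_const (by positivity)
    simpa using (tendsto_exp_atBot.comp this).const_mul (-v)
  rw [← ofReal_integral_eq_lintegral_ofReal
    (integrableOn_Ioi_deriv_of_nonneg' hderiv hnonneg hlim)
    ((ae_restrict_iff' measurableSet_Ioi).mpr (Eventually.of_forall hnonneg)),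
    integral_Ioi_of_hasDerivAt_of_nonneg' hderiv hnonneg hlim]
  ring_nf

/-- `H₂ \ H₁` after the rotation taking `v` to the first basis vector and `u` to the unit vector
at angle `-θ`. -/
def wedge (θ r₁ r₂ : ℝ) : Set (ℝ × ℝ) := {p | r₂ ≤ p.1 ∧ p.1 * cos θ - p.2 * sin θ < r₁}

theorem measurableSet_wedge (θ r₁ r₂ : ℝ) : MeasurableSet (wedge θ r₁ r₂) := by
  rw [wedge, ofPred_and]
  exact (measurableSet_le measurable_const measurable_fst).inter
    (measurableSet_lt (by fun_prop) measurable_const)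

theorem polarCoord_symm_mem_wedge {θ r₁ r₂ : ℝ} (ρ φ : ℝ) :
    polarCoord.symm (ρ, φ) ∈ wedge θ r₁ r₂ ↔ r₂ ≤ ρ * cos φ ∧ ρ * cos (φ + θ) < r₁ := by
  rw [polarCoord_symm_apply, wedge, mem_ofPred_eq, cos_add]
  ring_nf

theorem isoGaussianPDF_polarCoord_symm (v ρ φ : ℝ) :
    isoGaussianPDF v (polarCoord.symm (ρ, φ)) = (2 * π * v)⁻¹ * exp (-ρ ^ 2 / (2 * v)) := by
  rw [polarCoord_symm_apply, isoGaussianPDF]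
  congr 3
  linear_combination (-ρ ^ 2) * sin_sq_add_cos_sq φ

theorem lintegral_polar_wedge_le {v : ℝ} {θ r₁ r₂ ρ : ℝ} (hθ : 0 ≤ θ) (hr₂ : 0 ≤ r₂)
    (hr₁₂ : r₁ ≤ r₂) (hρ : 0 < ρ) :
    ∫⁻ φ in Ioo (-π) π, ENNReal.ofReal ρ *
        (wedge θ r₁ r₂).indicator (fun p => ENNReal.ofReal (isoGaussianPDF v p))
          (polarCoord.symm (ρ, φ)) ≤
      ENNReal.ofReal ((2 * π * v)⁻¹ * (ρ * exp (-ρ ^ 2 / (2 * v)))) *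
        (Ici r₂).indicator (fun _ => ENNReal.ofReal θ) ρ := by
  have hS : MeasurableSet {φ | r₂ ≤ ρ * cos φ ∧ ρ * cos (φ + θ) < r₁} := by
    rw [ofPred_and]
    exact (measurableSet_le measurable_const (by fun_prop)).inter
      (measurableSet_lt (by fun_prop) measurable_const)
  set S := {φ | r₂ ≤ ρ * cos φ ∧ ρ * cos (φ + θ) < r₁}
  have hintegrand : ∀ φ, ENNReal.ofReal ρ *
      (wedge θ r₁ r₂).indicator (fun p => ENNReal.ofReal (isoGaussianPDF v p))
        (polarCoord.symm (ρ, φ)) =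
      S.indicator (fun _ => ENNReal.ofReal ((2 * π * v)⁻¹ * (ρ * exp (-ρ ^ 2 / (2 * v))))) φ := by
    intro φ
    by_cases hφ : φ ∈ S
    · rw [indicator_of_mem ((polarCoord_symm_mem_wedge ρ φ).mpr hφ), indicator_of_mem hφ,
        isoGaussianPDF_polarCoord_symm, ← ENNReal.ofReal_mul hρ.le]
      ring_nf
    · rw [indicator_of_notMem (mt (polarCoord_symm_mem_wedge ρ φ).mp hφ), indicator_of_notMem hφ,
        mul_zero]
  simp_rw [hintegrand]
  rw [lintegral_indicator_const hS, Measure.restrict_apply hS]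
  gcongr
  exact volume_polar_section_le hθ hr₂ hr₁₂ hρ

theorem gaussianReal_prod_wedge_le {v : ℝ≥0} (hv : v ≠ 0) {θ r₁ r₂ : ℝ} (hθ : 0 ≤ θ)
    (hr₂ : 0 ≤ r₂) (hr₁₂ : r₁ ≤ r₂) :
    (gaussianReal 0 v).prod (gaussianReal 0 v) (wedge θ r₁ r₂) ≤
      ENNReal.ofReal (θ / (2 * π) * exp (-r₂ ^ 2 / (2 * v))) := by
  have hv' : (0 : ℝ) < v := by positivity
  have hmeas : Measurable fun p : ℝ × ℝ => ENNReal.ofReal p.1 •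
      (wedge θ r₁ r₂).indicator (fun p => ENNReal.ofReal (isoGaussianPDF v p))
        (polarCoord.symm p) :=
    measurable_fst.ennreal_ofReal.mul (((measurable_isoGaussianPDF v).ennreal_ofReal.indicator
      (measurableSet_wedge θ r₁ r₂)).comp continuous_polarCoord_symm.measurable)
  rw [gaussianReal_prod_eq_withDensity hv, withDensity_apply _ (measurableSet_wedge θ r₁ r₂),
    ← lintegral_indicator (measurableSet_wedge θ r₁ r₂), ← lintegral_comp_polarCoord_symm,
    polarCoord_target, Measure.volume_eq_prod, ← Measure.prod_restrict,
    lintegral_prod _ hmeas.aemeasurable]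
  set c : ℝ → ℝ := fun ρ => (2 * π * v)⁻¹ * (ρ * exp (-ρ ^ 2 / (2 * (v : ℝ))))
  calc _ ≤ ∫⁻ ρ in Ioi 0, (Ici r₂).indicator (fun ρ => ENNReal.ofReal (c ρ) * ENNReal.ofReal θ) ρ :=
        setLIntegral_mono' measurableSet_Ioi fun ρ hρ => by
          rw [indicator_mul_right]
          exact lintegral_polar_wedge_le hθ hr₂ hr₁₂ hρ
    _ ≤ ∫⁻ ρ in Ici r₂, ENNReal.ofReal (c ρ) * ENNReal.ofReal θ := by
        rw [← lintegral_indicator measurableSet_Ici]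
        exact setLIntegral_le_lintegral _ _
    _ = ENNReal.ofReal ((2 * π * v)⁻¹ * (v * exp (-r₂ ^ 2 / (2 * v)))) * ENNReal.ofReal θ := by
        rw [lintegral_mul_const _ (by fun_prop), Measure.restrict_congr_set Ioi_ae_eq_Ici.symm]
        simp_rw [c, ENNReal.ofReal_mul (inv_nonneg.mpr (by positivity : (0 : ℝ) ≤ 2 * π * v))]
        rw [lintegral_const_mul _ (by fun_prop), lintegral_Ioi_mul_exp_neg_sq_div hv' hr₂]
    _ = _ := by
        rw [← ENNReal.ofReal_mul (by positivity)]
        congr 1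
        field_simp

/-- Union of two half-planes for an isotropic bivariate Gaussian:
`P(H₁ ∪ H₂) ≤ Q(r₁/σ) + (θ/(2π)) exp(−r₂²/(2σ²))`. -/
theorem halfplane_union_bound
    (σ : ℝ) (hσ : 0 < σ)
    (u v : ℝ × ℝ) (hu : u.1 ^ 2 + u.2 ^ 2 = 1) (hv : v.1 ^ 2 + v.2 ^ 2 = 1)
    (θ : ℝ) (hθ : θ ∈ Set.Icc 0 Real.pi)
    (hcos : Real.cos θ = u.1 * v.1 + u.2 * v.2)
    (r₁ r₂ : ℝ) (hr₁ : 0 ≤ r₁) (hr₁₂ : r₁ ≤ r₂)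
    (P : Measure (ℝ × ℝ))
    (hP : P = (gaussianReal 0 (σ ^ 2).toNNReal).prod
              (gaussianReal 0 (σ ^ 2).toNNReal)) :
    (P ({x : ℝ × ℝ | x.1 * u.1 + x.2 * u.2 ≥ r₁} ∪
        {x : ℝ × ℝ | x.1 * v.1 + x.2 * v.2 ≥ r₂})).toReal ≤
      gaussianQ (r₁ / σ) + θ / (2 * Real.pi) * Real.exp (-(r₂ ^ 2) / (2 * σ ^ 2)) := by
  have hvar : (σ ^ 2).toNNReal ≠ 0 := by simp [hσ.ne']
  set H₁ := {x : ℝ × ℝ | x.1 * u.1 + x.2 * u.2 ≥ r₁}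
  set H₂ := {x : ℝ × ℝ | x.1 * v.1 + x.2 * v.2 ≥ r₂}
  have hH₁ : P H₁ = ENNReal.ofReal (gaussianQ (r₁ / σ)) := by
    rw [hP, gaussianReal_prod_halfPlane hvar hu, gaussianReal_sq_Ici hσ]
  have hH₂H₁ : P (H₂ \ H₁) ≤ ENNReal.ofReal (θ / (2 * π) * exp (-(r₂ ^ 2) / (2 * σ ^ 2))) := by
    obtain ⟨ε, hε, hu_rot⟩ := exists_orthoMap_eq_cos_sub_sin hu hv hcos
    have hrot : H₂ \ H₁ = orthoMap v ε ⁻¹' wedge θ r₁ r₂ := by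
      ext x
      simp [H₁, H₂, wedge, hu_rot x, orthoMap_apply]
    rw [hP, hrot, (measurePreserving_orthoMap hvar hv hε).measure_preimage
      (measurableSet_wedge θ r₁ r₂).nullMeasurableSet]
    simpa [Real.coe_toNNReal _ (sq_nonneg σ)] using
      gaussianReal_prod_wedge_le hvar hθ.1 (hr₁.trans hr₁₂) hr₁₂
  calc (P (H₁ ∪ H₂)).toReal = P.real (H₁ ∪ H₂ \ H₁) := by rw [union_sdiff_self]; rfl
    _ ≤ P.real H₁ + P.real (H₂ \ H₁) := measureReal_union_le _ _
    _ ≤ _ := add_le_add (by rw [measureReal_def, hH₁, ENNReal.toReal_ofReal (gaussianQ_nonneg _)])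
        (ENNReal.toReal_le_of_le_ofReal (by have := hθ.1; positivity) hH₂H₁)
end

section
/- Let ω ∈ ℝ₊ⁿ be nonzero, γ > 0, x₀ = γ·𝟙 the BPSK image of the zero vector, ω̄_virt = γ(𝟙 − 2ω_virt) with ω_virt = (‖ω‖₁/‖ω‖₂²)ω. Then the hyperplane {y ∈ ℝⁿ : ⟨ω, y⟩ = 0} is equidistant from x₀ and ω̄_virt; in particular the distance from x₀ to this hyperplane is γ√(w_p(ω)). -/
open Finset

/-!
The weights are nonnegative, so `⟨ω, γ𝟙⟩ = γ‖ω‖₁`, while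
`⟨ω, γ(𝟙 - 2ω_virt)⟩ = γ‖ω‖₁ - 2γ (‖ω‖₁/‖ω‖₂²) ‖ω‖₂² = -γ‖ω‖₁`: the two points lie on opposite
sides of the hyperplane at the same distance `γ‖ω‖₁/‖ω‖₂ = γ√(w_p(ω))`.
-/

variable {ι : Type*} [Fintype ι]

lemma sum_mul_const (ω : ι → ℝ) (γ : ℝ) : ∑ i, ω i * γ = γ * ∑ i, ω i := by
  rw [← sum_mul, mul_comm]

/-- Holds also for `ω = 0`, where the division by `‖ω‖₂² = 0` returns `0`. -/
lemma sum_abs_div_sum_sq_mul_sum_sq (ω : ι → ℝ) :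
    (∑ i, |ω i|) / (∑ i, ω i ^ 2) * ∑ i, ω i ^ 2 = ∑ i, |ω i| := by
  refine div_mul_cancel_of_imp fun hsq => ?_
  have hzero : ∀ i, ω i = 0 := fun i =>
    pow_eq_zero_iff two_ne_zero |>.1 <|
      (sum_eq_zero_iff_of_nonneg fun j _ => sq_nonneg (ω j)).1 hsq i (mem_univ i)
  simp [hzero]

lemma sum_mul_reflect (ω : ι → ℝ) (γ c : ℝ) :
    ∑ i, ω i * (γ * (1 - 2 * (c * ω i))) = γ * ∑ i, ω i - 2 * γ * (c * ∑ i, ω i ^ 2) := by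
  simp only [mul_sub, mul_one, sum_sub_distrib, mul_sum]
  congr 1 <;> refine sum_congr rfl fun i _ => by ring

lemma sum_mul_virtual_of_nonneg {ω : ι → ℝ} (hω : ∀ i, 0 ≤ ω i) (γ : ℝ) :
    ∑ i, ω i * (γ * (1 - 2 * ((∑ j, |ω j|) / (∑ j, ω j ^ 2) * ω i))) = -(γ * ∑ i, ω i) := by
  have hl1 : ∑ j, |ω j| = ∑ j, ω j := sum_congr rfl fun j _ => abs_of_nonneg (hω j)
  rw [sum_mul_reflect, sum_abs_div_sum_sq_mul_sum_sq, hl1]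
  ring

lemma abs_mul_sum_div_sqrt_of_nonneg {ω : ι → ℝ} (hω : ∀ i, 0 ≤ ω i) {γ : ℝ} (hγ : 0 ≤ γ) :
    |γ * ∑ i, ω i| / √(∑ i, ω i ^ 2) = γ * √((∑ i, |ω i|) ^ 2 / ∑ i, ω i ^ 2) := by
  have hl1 : ∑ j, |ω j| = ∑ j, ω j := sum_congr rfl fun j _ => abs_of_nonneg (hω j)
  have hsum : 0 ≤ ∑ i, ω i := sum_nonneg fun i _ => hω i
  rw [hl1, abs_of_nonneg (mul_nonneg hγ hsum), Real.sqrt_div (sq_nonneg _), Real.sqrt_sq hsum,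
    mul_div_assoc]

theorem hyperplane_equidistant_general
    (n : ℕ) (γ : ℝ) (hγ : 0 < γ)
    (ω : Fin n → ℝ) (hω : ∀ i, 0 ≤ ω i)
    (x₀ ωvirt ωbarvirt : Fin n → ℝ)
    (hx₀ : x₀ = fun _ => γ)
    (hvirt : ωvirt = fun i => ((∑ j, |ω j|) / (∑ j, ω j ^ 2)) * ω i)
    (hbar : ωbarvirt = fun i => γ * (1 - 2 * ωvirt i)) :
    |∑ i, ω i * x₀ i| / Real.sqrt (∑ i, ω i ^ 2) =
        |∑ i, ω i * ωbarvirt i| / Real.sqrt (∑ i, ω i ^ 2) ∧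
      |∑ i, ω i * x₀ i| / Real.sqrt (∑ i, ω i ^ 2) =
        γ * Real.sqrt ((∑ i, |ω i|) ^ 2 / (∑ i, ω i ^ 2)) := by
  subst hx₀ hbar hvirt
  rw [sum_mul_const, sum_mul_virtual_of_nonneg hω, abs_neg]
  exact ⟨rfl, abs_mul_sum_div_sqrt_of_nonneg hω hγ.le⟩

/-- The hyperplane `{y : ⟨ω, y⟩ = 0}` is equidistant from the BPSK image `x₀ = γ𝟙`
of the zero codeword and from `ω̄_virt`; the common distance is `γ√(w_p(ω))`.
The distance from a point `p` to the hyperplane is `|⟨ω, p⟩|/‖ω‖₂`. -/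
theorem hyperplane_equidistant
    (n : ℕ) (γ : ℝ) (hγ : 0 < γ)
    (ω : Fin n → ℝ) (hω : ∀ i, 0 ≤ ω i) (hne : ω ≠ 0)
    (x₀ ωvirt ωbarvirt : Fin n → ℝ)
    (hx₀ : x₀ = fun _ => γ)
    (hvirt : ωvirt = fun i => ((∑ j, |ω j|) / (∑ j, ω j ^ 2)) * ω i)
    (hbar : ωbarvirt = fun i => γ * (1 - 2 * ωvirt i)) :
    |∑ i, ω i * x₀ i| / Real.sqrt (∑ i, ω i ^ 2) =
        |∑ i, ω i * ωbarvirt i| / Real.sqrt (∑ i, ω i ^ 2) ∧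
      |∑ i, ω i * x₀ i| / Real.sqrt (∑ i, ω i ^ 2) =
        γ * Real.sqrt ((∑ i, |ω i|) ^ 2 / (∑ i, ω i ^ 2)) :=
  hyperplane_equidistant_general n γ hγ ω hω x₀ ωvirt ωbarvirt hx₀ hvirt hbar
end
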